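/- arXiv:2512.17103 — 5 statements merged into one kernel-verified Lean document; each statement's English description precedes it below -/
import Mathlib

section
/- Let H be a real inner product space equipped with two inner products ⟨·,·⟩ and ⟨·,·⟩', and let ε ≥ 0 be such that (1+ε)⁻¹‖u‖² ≤ ‖u‖'² ≤ (1+ε)‖u‖² for all u in a finite-dimensional subspace S. Let A be a symmetric operator with A(S) ⊆ S, let E be a linear operator, and suppose ‖Au‖ ≤ α‖u‖ for all u ∈ S and ‖Eu_i‖ ≤ δ for an orthonormal basis u_1,…,u_k of S (with respect to ⟨·,·⟩). Then for every u ∈ S with ‖u‖' = 1, ⟨(A+E)u, u⟩' ≤ (1+ε)α + C₀² √k · δ, where C₀ is a constant with C₀⁻¹‖v‖ ≤ ‖v‖' ≤ C₀‖v‖ for all v. -/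
open RealInnerProductSpace

/-- Min-max type perturbation estimate: for `u` in the span of an orthonormal
basis `u_1, …, u_k`, the primed Rayleigh quotient of `A + E` is bounded by
`(1+ε)α + C₀² √k δ`. -/
theorem stmt0
    {H : Type*} [NormedAddCommGroup H] [InnerProductSpace ℝ H]
    (B : H →ₗ[ℝ] H →ₗ[ℝ] ℝ) (hBsymm : ∀ x y : H, B x y = B y x)
    (C₀ : ℝ) (hC₀ : 1 ≤ C₀)
    (hC₀norm : ∀ v : H, C₀⁻¹ * ‖v‖ ≤ Real.sqrt (B v v) ∧ Real.sqrt (B v v) ≤ C₀ * ‖v‖)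
    (S : Submodule ℝ H) (k : ℕ) (u : Fin k → H)
    (hu : Orthonormal ℝ u) (hspan : Submodule.span ℝ (Set.range u) = S)
    (ε : ℝ) (hε : 0 ≤ ε)
    (hεnorm : ∀ w ∈ S, (1 + ε)⁻¹ * ‖w‖ ^ 2 ≤ B w w ∧ B w w ≤ (1 + ε) * ‖w‖ ^ 2)
    (A E : H →ₗ[ℝ] H)
    (hAsym : ∀ x y : H, ⟪A x, y⟫ = ⟪x, A y⟫)
    (hAS : ∀ w ∈ S, A w ∈ S)
    (α : ℝ) (hAα : ∀ w ∈ S, ‖A w‖ ≤ α * ‖w‖)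
    (δ : ℝ) (hδ0 : 0 ≤ δ) (hδ : ∀ i : Fin k, ‖E (u i)‖ ≤ δ) :
    ∀ w ∈ S, Real.sqrt (B w w) = 1 →
      B (A w + E w) w ≤ (1 + ε) * α + C₀ ^ 2 * Real.sqrt k * δ := by
  intro w hw hwB
  have hC₀0 : (0 : ℝ) < C₀ := lt_of_lt_of_le one_pos hC₀
  -- B is nonnegative on the diagonal
  have hBnn : ∀ v : H, 0 ≤ B v v := by
    intro v
    rcases le_or_gt 0 (B v v) with h | h
    · exact h
    · exfalso
      have hs : Real.sqrt (B v v) = 0 := Real.sqrt_eq_zero_of_nonpos h.le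
      have h1 := (hC₀norm v).1
      rw [hs] at h1
      have hv0 : ‖v‖ = 0 := by
        have h2 : (0:ℝ) < C₀⁻¹ := inv_pos.mpr hC₀0
        have h3 : (0:ℝ) ≤ ‖v‖ := norm_nonneg v
        nlinarith
      have : v = 0 := norm_eq_zero.mp hv0
      subst this
      simp at h
  -- Cauchy-Schwarz for B
  have hCS : ∀ x y : H, B x y ≤ Real.sqrt (B x x) * Real.sqrt (B y y) := by
    intro x y
    have hdisc : discrim (B y y) (2 * B x y) (B x x) ≤ 0 := by
      apply discrim_le_zero
      intro t
      have := hBnn (x + t • y)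
      simp only [map_add, map_smul, LinearMap.add_apply, LinearMap.smul_apply,
        smul_eq_mul] at this
      rw [hBsymm y x] at this
      nlinarith [this]
    rw [discrim] at hdisc
    have hsq : (B x y) ^ 2 ≤ B x x * B y y := by nlinarith
    calc B x y ≤ |B x y| := le_abs_self _
      _ = Real.sqrt ((B x y) ^ 2) := (Real.sqrt_sq_eq_abs _).symm
      _ ≤ Real.sqrt (B x x * B y y) := Real.sqrt_le_sqrt hsq
      _ = Real.sqrt (B x x) * Real.sqrt (B y y) := Real.sqrt_mul (hBnn x) _
  have hB1 : B w w = 1 := by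
    have := Real.sq_sqrt (hBnn w)
    rw [hwB] at this; linarith
  have hε1 : (0:ℝ) < 1 + ε := by linarith
  -- ‖w‖² ≤ 1 + ε
  have hwn2 : ‖w‖ ^ 2 ≤ 1 + ε := by
    have h1 := (hεnorm w hw).1
    rw [hB1] at h1
    calc ‖w‖ ^ 2 = (1 + ε) * ((1+ε)⁻¹ * ‖w‖ ^ 2) := by field_simp
      _ ≤ (1 + ε) * 1 := by nlinarith
      _ = 1 + ε := mul_one _
  -- ‖w‖ ≤ C₀
  have hwC : ‖w‖ ≤ C₀ := by
    have h1 := (hC₀norm w).1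
    rw [hwB] at h1
    calc ‖w‖ = C₀ * (C₀⁻¹ * ‖w‖) := by field_simp
      _ ≤ C₀ * 1 := by nlinarith
      _ = C₀ := mul_one _
  -- w ≠ 0
  have hw0 : w ≠ 0 := by
    intro h; subst h; simp at hB1
  have hwpos : 0 < ‖w‖ := norm_pos_iff.mpr hw0
  have hα0 : 0 ≤ α := by
    have := hAα w hw
    nlinarith [norm_nonneg (A w)]
  -- Term 1: B (A w) w ≤ (1+ε)α
  have hterm1 : B (A w) w ≤ (1 + ε) * α := by
    have hAw := hAS w hw
    have h1 := hCS (A w) w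
    rw [hwB, mul_one] at h1
    have h2 : B (A w) (A w) ≤ ((1 + ε) * α) ^ 2 := by
      have h3 := (hεnorm (A w) hAw).2
      have h4 := hAα w hw
      have h5 : ‖A w‖ ^ 2 ≤ α ^ 2 * ‖w‖ ^ 2 := by nlinarith [norm_nonneg (A w)]
      have h6 : B (A w) (A w) ≤ (1 + ε) * (α ^ 2 * ‖w‖ ^ 2) := by nlinarith
      have h7 : α ^ 2 * ‖w‖ ^ 2 ≤ α ^ 2 * (1 + ε) := by nlinarith [sq_nonneg α]
      have h8 : (1 + ε) * (α ^ 2 * ‖w‖ ^ 2) ≤ (1 + ε) * (α ^ 2 * (1 + ε)) :=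
        mul_le_mul_of_nonneg_left h7 hε1.le
      nlinarith
    calc B (A w) w ≤ Real.sqrt (B (A w) (A w)) := h1
      _ ≤ Real.sqrt (((1 + ε) * α) ^ 2) := Real.sqrt_le_sqrt h2
      _ = (1 + ε) * α := by
          rw [Real.sqrt_sq (by positivity)]
  -- decompose w in the basis
  obtain ⟨c, hc⟩ : ∃ c : Fin k → ℝ, ∑ i, c i • u i = w := by
    have : w ∈ Submodule.span ℝ (Set.range u) := hspan ▸ hw
    exact (Submodule.mem_span_range_iff_exists_fun ℝ).mp this
  -- ‖w‖² = ∑ c i ^ 2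
  have hnorm2 : ‖w‖ ^ 2 = ∑ i, c i ^ 2 := by
    have := hu.inner_sum c c Finset.univ
    rw [hc] at this
    rw [← real_inner_self_eq_norm_sq, this]
    simp [sq]
  -- ‖E w‖ ≤ δ * √k * ‖w‖
  have hEw : ‖E w‖ ≤ δ * (Real.sqrt k * ‖w‖) := by
    have h1 : E w = ∑ i, c i • E (u i) := by
      rw [← hc]; simp [map_sum]
    have h2 : ‖E w‖ ≤ ∑ i, |c i| * δ := by
      rw [h1]
      refine (norm_sum_le _ _).trans (Finset.sum_le_sum fun i _ => ?_)
      rw [norm_smul, Real.norm_eq_abs]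
      exact mul_le_mul_of_nonneg_left (hδ i) (abs_nonneg _)
    have h3 : ∑ i, |c i| ≤ Real.sqrt k * ‖w‖ := by
      have h4 : (∑ i, |c i|) ^ 2 ≤ (k : ℝ) * ∑ i, |c i| ^ 2 := by
        have := sq_sum_le_card_mul_sum_sq (s := (Finset.univ : Finset (Fin k)))
          (f := fun i => |c i|)
        simpa using this
      have h5 : (∑ i, |c i|) ^ 2 ≤ (Real.sqrt k * ‖w‖) ^ 2 := by
        have : ∑ i, |c i| ^ 2 = ‖w‖ ^ 2 := by
          rw [hnorm2]; simp [sq_abs]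
        rw [mul_pow, Real.sq_sqrt (Nat.cast_nonneg k)]
        rw [this] at h4; exact h4
      have h6 : (0:ℝ) ≤ ∑ i, |c i| := Finset.sum_nonneg fun i _ => abs_nonneg _
      calc ∑ i, |c i| = Real.sqrt ((∑ i, |c i|) ^ 2) := (Real.sqrt_sq h6).symm
        _ ≤ Real.sqrt ((Real.sqrt k * ‖w‖) ^ 2) := Real.sqrt_le_sqrt h5
        _ = Real.sqrt k * ‖w‖ := Real.sqrt_sq (by positivity)
    calc ‖E w‖ ≤ ∑ i, |c i| * δ := h2
      _ = (∑ i, |c i|) * δ := by rw [Finset.sum_mul]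
      _ ≤ (Real.sqrt k * ‖w‖) * δ := mul_le_mul_of_nonneg_right h3 hδ0
      _ = δ * (Real.sqrt k * ‖w‖) := by ring
  -- Term 2: B (E w) w ≤ C₀² √k δ
  have hterm2 : B (E w) w ≤ C₀ ^ 2 * Real.sqrt k * δ := by
    have h1 := hCS (E w) w
    rw [hwB, mul_one] at h1
    have h2 := (hC₀norm (E w)).2
    have h3 : ‖E w‖ ≤ δ * (Real.sqrt k * C₀) := by
      refine hEw.trans ?_
      have : Real.sqrt k * ‖w‖ ≤ Real.sqrt k * C₀ :=
        mul_le_mul_of_nonneg_left hwC (Real.sqrt_nonneg _)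
      nlinarith
    calc B (E w) w ≤ Real.sqrt (B (E w) (E w)) := h1
      _ ≤ C₀ * ‖E w‖ := h2
      _ ≤ C₀ * (δ * (Real.sqrt k * C₀)) :=
          mul_le_mul_of_nonneg_left h3 hC₀0.le
      _ = C₀ ^ 2 * Real.sqrt k * δ := by ring
  have : B (A w + E w) w = B (A w) w + B (E w) w := by
    simp [map_add]
  rw [this]
  linarith
end

section
/- Let y : [x₀, b] → ℝ be twice differentiable with y'' (x) ≥ y(x) for all x, y > 0 on [x₀, b], and y'(b) ≤ 0. Then for all x ∈ [x₀, b], y(x₀) ≥ cosh(x - x₀)·y(x) - sinh(x - x₀)·y'(x) ≥ (1/2)·e^{x - x₀}·y(x). -/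
open Real Set

/-! The function `z ↦ cosh (z - x₀) y z - sinh (z - x₀) y' z` equals `y x₀` at `z = x₀` and has
derivative `sinh (z - x₀) (y z - y'' z) ≤ 0`, so it is antitone on `[x₀, b]`: this is the first
inequality. Since `y'' ≥ y > 0`, `y'` is increasing, hence `y' ≤ y' b ≤ 0`, and then
`cosh t y - sinh t y' ≥ cosh t y ≥ eᵗ y / 2`. -/

section Icc

variable {f : ℝ → ℝ} {a b : ℝ}

theorem monotoneOn_Icc_of_deriv_nonneg (hf : ∀ x ∈ Icc a b, DifferentiableAt ℝ f x)
    (hf' : ∀ x ∈ Icc a b, 0 ≤ deriv f x) : MonotoneOn f (Icc a b) :=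
  monotoneOn_of_deriv_nonneg (convex_Icc a b)
    (fun x hx ↦ (hf x hx).continuousAt.continuousWithinAt)
    (fun x hx ↦ (hf x (interior_subset hx)).differentiableWithinAt)
    (fun x hx ↦ hf' x (interior_subset hx))

theorem antitoneOn_Icc_of_deriv_nonpos (hf : ∀ x ∈ Icc a b, DifferentiableAt ℝ f x)
    (hf' : ∀ x ∈ Icc a b, deriv f x ≤ 0) : AntitoneOn f (Icc a b) :=
  antitoneOn_of_deriv_nonpos (convex_Icc a b)
    (fun x hx ↦ (hf x hx).continuousAt.continuousWithinAt)
    (fun x hx ↦ (hf x (interior_subset hx)).differentiableWithinAt)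
    (fun x hx ↦ hf' x (interior_subset hx))

end Icc

/-- The value at `a` of the solution of `u'' = u` whose Cauchy data at `z` are `(y z, y' z)`. -/
noncomputable def coshTransport (y : ℝ → ℝ) (a z : ℝ) : ℝ :=
  cosh (z - a) * y z - sinh (z - a) * deriv y z

theorem coshTransport_self (y : ℝ → ℝ) (a : ℝ) : coshTransport y a a = y a := by
  simp [coshTransport]

theorem hasDerivAt_coshTransport {y : ℝ → ℝ} {a z : ℝ} (hy : DifferentiableAt ℝ y z)
    (hy' : DifferentiableAt ℝ (deriv y) z) :
    HasDerivAt (coshTransport y a) (sinh (z - a) * (y z - deriv (deriv y) z)) z := by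
  have hshift : HasDerivAt (fun z ↦ z - a) 1 z := (hasDerivAt_id z).sub_const a
  have hcosh := (hasDerivAt_cosh (z - a)).comp z hshift
  have hsinh := (hasDerivAt_sinh (z - a)).comp z hshift
  exact ((hcosh.mul hy.hasDerivAt).sub (hsinh.mul hy'.hasDerivAt)).congr_deriv
    (by simp only [Function.comp_apply]; ring)

theorem half_exp_mul_le_cosh_mul_sub_sinh_mul {t u v : ℝ} (ht : 0 ≤ t) (hu : 0 ≤ u)
    (hv : v ≤ 0) : 1 / 2 * exp t * u ≤ cosh t * u - sinh t * v := by
  have hsinh : 0 ≤ sinh t := sinh_nonneg_iff.2 ht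
  calc 1 / 2 * exp t * u ≤ 1 / 2 * exp t * u + 1 / 2 * exp (-t) * u := by
        have := exp_pos (-t); nlinarith
    _ = cosh t * u := by rw [cosh_eq]; ring
    _ ≤ cosh t * u - sinh t * v := by nlinarith

/-- Sturm-type comparison: if `y'' ≥ y`, `y > 0` on `[x₀, b]` and `y'(b) ≤ 0`,
then `y(x₀) ≥ cosh(x-x₀) y(x) - sinh(x-x₀) y'(x) ≥ (1/2) e^{x-x₀} y(x)`. -/
theorem stmt3
    (y : ℝ → ℝ) (x₀ b : ℝ) (hx₀b : x₀ ≤ b)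
    (hdiff : ∀ x ∈ Icc x₀ b, DifferentiableAt ℝ y x)
    (hdiff' : ∀ x ∈ Icc x₀ b, DifferentiableAt ℝ (deriv y) x)
    (hODE : ∀ x ∈ Icc x₀ b, deriv (deriv y) x ≥ y x)
    (hpos : ∀ x ∈ Icc x₀ b, 0 < y x)
    (hb : deriv y b ≤ 0) :
    ∀ x ∈ Icc x₀ b,
      y x₀ ≥ Real.cosh (x - x₀) * y x - Real.sinh (x - x₀) * deriv y x ∧
      Real.cosh (x - x₀) * y x - Real.sinh (x - x₀) * deriv y x ≥
        (1 / 2) * Real.exp (x - x₀) * y x := by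
  intro x hx
  have hderiv_mono : MonotoneOn (deriv y) (Icc x₀ b) :=
    monotoneOn_Icc_of_deriv_nonneg hdiff' fun z hz ↦ (hpos z hz).le.trans (hODE z hz)
  have htransport_anti : AntitoneOn (coshTransport y x₀) (Icc x₀ b) :=
    antitoneOn_Icc_of_deriv_nonpos (fun z hz ↦ (hasDerivAt_coshTransport (hdiff z hz)
      (hdiff' z hz)).differentiableAt) fun z hz ↦ by
      rw [(hasDerivAt_coshTransport (hdiff z hz) (hdiff' z hz)).deriv]
      exact mul_nonpos_of_nonneg_of_nonpos (sinh_nonneg_iff.2 (sub_nonneg.2 hz.1))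
        (sub_nonpos.2 (hODE z hz))
  refine ⟨?_, half_exp_mul_le_cosh_mul_sub_sinh_mul (sub_nonneg.2 hx.1) (hpos x hx).le
    ((hderiv_mono hx (right_mem_Icc.2 hx₀b) hx.2).trans hb)⟩
  exact (htransport_anti (left_mem_Icc.2 hx₀b) hx hx.1).trans_eq (coshTransport_self y x₀)
end

section
/- Let u : [a, b] → ℝ be C² satisfying u'' = c·u for a continuous function c ≥ 4 on [a, b], and suppose u has no zero on [a, b] and (without loss of generality) u > 0 with u'(b) ≤ 0. Then u²(a) ≥ (1/2)·e^{2(x - a)}·u²(x) for all x ∈ [a, b]. -/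
/-!
With `v = u²` and `φ y = cosh (2 (b - y))` one has `v'' = 2 u'² + 2 c u² ≥ 4 v` and `φ'' = 4 φ`,
so the Wronskian `v' φ - v φ'` is nondecreasing; it equals `2 u(b) u'(b) ≤ 0` at `b`, hence is
nonpositive, and `v / φ` is nonincreasing on `[a, b]`. Comparing `a` with `x` leaves the elementary
bound `e^{2(x-a)} cosh (2(b-x)) ≤ 2 cosh (2(b-a))`.
-/

open Real Set

section Icc

variable {f f' : ℝ → ℝ} {a b : ℝ}

lemma monotoneOn_Icc_of_hasDerivAt_nonneg (hf : ∀ y ∈ Icc a b, HasDerivAt f (f' y) y)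
    (hf'₀ : ∀ y ∈ Icc a b, 0 ≤ f' y) : MonotoneOn f (Icc a b) :=
  monotoneOn_of_hasDerivWithinAt_nonneg (convex_Icc a b)
    (fun y hy => (hf y hy).continuousAt.continuousWithinAt)
    (fun y hy => (hf y (interior_subset hy)).hasDerivWithinAt)
    (fun y hy => hf'₀ y (interior_subset hy))

lemma antitoneOn_Icc_of_hasDerivAt_nonpos (hf : ∀ y ∈ Icc a b, HasDerivAt f (f' y) y)
    (hf'₀ : ∀ y ∈ Icc a b, f' y ≤ 0) : AntitoneOn f (Icc a b) :=
  antitoneOn_of_hasDerivWithinAt_nonpos (convex_Icc a b)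
    (fun y hy => (hf y hy).continuousAt.continuousWithinAt)
    (fun y hy => (hf y (interior_subset hy)).hasDerivWithinAt)
    (fun y hy => hf'₀ y (interior_subset hy))

end Icc

section Wronskian

variable {v v' v'' φ φ' φ'' : ℝ → ℝ} {a b : ℝ}

lemma monotoneOn_wronskian (hv : ∀ y ∈ Icc a b, HasDerivAt v (v' y) y)
    (hv' : ∀ y ∈ Icc a b, HasDerivAt v' (v'' y) y) (hφ : ∀ y ∈ Icc a b, HasDerivAt φ (φ' y) y)
    (hφ' : ∀ y ∈ Icc a b, HasDerivAt φ' (φ'' y) y)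
    (hcmp : ∀ y ∈ Icc a b, v y * φ'' y ≤ v'' y * φ y) :
    MonotoneOn (fun y => v' y * φ y - v y * φ' y) (Icc a b) := by
  refine monotoneOn_Icc_of_hasDerivAt_nonneg (f' := fun y => v'' y * φ y - v y * φ'' y)
    (fun y hy => ?_) (fun y hy => sub_nonneg.mpr (hcmp y hy))
  exact ((hv' y hy).mul (hφ y hy)).sub ((hv y hy).mul (hφ' y hy)) |>.congr_deriv (by ring)

lemma antitoneOn_div_of_wronskian_nonpos (hv : ∀ y ∈ Icc a b, HasDerivAt v (v' y) y)
    (hφ : ∀ y ∈ Icc a b, HasDerivAt φ (φ' y) y) (hφpos : ∀ y ∈ Icc a b, 0 < φ y)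
    (hw : ∀ y ∈ Icc a b, v' y * φ y - v y * φ' y ≤ 0) :
    AntitoneOn (fun y => v y / φ y) (Icc a b) :=
  antitoneOn_Icc_of_hasDerivAt_nonpos (fun y hy => (hv y hy).div (hφ y hy) (hφpos y hy).ne')
    (fun y hy => div_nonpos_of_nonpos_of_nonneg (hw y hy) (sq_nonneg _))

lemma antitoneOn_div_of_wronskian_right_nonpos (hv : ∀ y ∈ Icc a b, HasDerivAt v (v' y) y)
    (hv' : ∀ y ∈ Icc a b, HasDerivAt v' (v'' y) y) (hφ : ∀ y ∈ Icc a b, HasDerivAt φ (φ' y) y)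
    (hφ' : ∀ y ∈ Icc a b, HasDerivAt φ' (φ'' y) y) (hφpos : ∀ y ∈ Icc a b, 0 < φ y)
    (hcmp : ∀ y ∈ Icc a b, v y * φ'' y ≤ v'' y * φ y) (hb : v' b * φ b ≤ v b * φ' b) :
    AntitoneOn (fun y => v y / φ y) (Icc a b) := by
  refine antitoneOn_div_of_wronskian_nonpos hv hφ hφpos fun y hy => ?_
  have hbIcc : b ∈ Icc a b := ⟨hy.1.trans hy.2, le_rfl⟩
  exact (monotoneOn_wronskian hv hv' hφ hφ' hcmp hy hbIcc hy.2).trans (sub_nonpos.mpr hb)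

end Wronskian

lemma antitoneOn_sq_div_cosh {u u' c : ℝ → ℝ} {a b : ℝ}
    (hu : ∀ y ∈ Icc a b, HasDerivAt u (u' y) y)
    (hu' : ∀ y ∈ Icc a b, HasDerivAt u' (c y * u y) y) (hc4 : ∀ y ∈ Icc a b, 4 ≤ c y)
    (hb : u b * u' b ≤ 0) :
    AntitoneOn (fun y => u y ^ 2 / cosh (2 * (b - y))) (Icc a b) := by
  have hlin : ∀ y, HasDerivAt (fun z => 2 * (b - z)) (-2) y := fun y => by
    simpa using ((hasDerivAt_id y).const_sub b).const_mul 2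
  refine antitoneOn_div_of_wronskian_right_nonpos
    (v' := fun y => 2 * u y * u' y) (v'' := fun y => 2 * u' y ^ 2 + 2 * c y * u y ^ 2)
    (φ' := fun y => -2 * sinh (2 * (b - y))) (φ'' := fun y => 4 * cosh (2 * (b - y)))
    (fun y hy => ?_) (fun y hy => ?_) (fun y _ => ?_) (fun y _ => ?_)
    (fun y _ => cosh_pos _) (fun y hy => ?_) ?_
  · exact (hu y hy).pow 2 |>.congr_deriv (by norm_num)
  · exact ((hu y hy).const_mul 2).mul (hu' y hy) |>.congr_deriv (by ring)
  · exact (hlin y).cosh.congr_deriv (by ring)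
  · exact ((hlin y).sinh.const_mul (-2)).congr_deriv (by ring)
  · have hv'' : 4 * u y ^ 2 ≤ 2 * u' y ^ 2 + 2 * c y * u y ^ 2 := by
      nlinarith [sq_nonneg (u' y), sq_nonneg (u y), hc4 y hy]
    calc u y ^ 2 * (4 * cosh (2 * (b - y))) = 4 * u y ^ 2 * cosh (2 * (b - y)) := by ring
      _ ≤ _ := mul_le_mul_of_nonneg_right hv'' (cosh_pos _).le
  · simp only [sub_self, mul_zero, cosh_zero, sinh_zero]
    linarith

lemma exp_mul_cosh_le_two_mul_cosh_add (p : ℝ) {q : ℝ} (hq : 0 ≤ q) :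
    exp p * cosh q ≤ 2 * cosh (p + q) := by
  have hsub : exp (p - q) ≤ exp (p + q) := exp_le_exp.mpr (by linarith)
  have hexp : exp p * cosh q = (exp (p + q) + exp (p - q)) / 2 := by
    rw [cosh_eq, exp_add, sub_eq_add_neg, exp_add]; ring
  rw [hexp, cosh_eq]
  linarith [exp_pos (-(p + q))]

theorem stmt6_general
    (u c : ℝ → ℝ) (a b : ℝ) (hab : a ≤ b)
    (hdiff : ∀ x ∈ Icc a b, DifferentiableAt ℝ u x)
    (hdiff' : ∀ x ∈ Icc a b, DifferentiableAt ℝ (deriv u) x)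
    (hc4 : ∀ x ∈ Icc a b, 4 ≤ c x)
    (hODE : ∀ x ∈ Icc a b, deriv (deriv u) x = c x * u x)
    (hpos : ∀ x ∈ Icc a b, 0 < u x)
    (hb : deriv u b ≤ 0) :
    ∀ x ∈ Icc a b, u a ^ 2 ≥ (1 / 2) * Real.exp (2 * (x - a)) * u x ^ 2 := by
  intro x hx
  have hanti := antitoneOn_sq_div_cosh (fun y hy => (hdiff y hy).hasDerivAt)
    (fun y hy => hODE y hy ▸ (hdiff' y hy).hasDerivAt) hc4
    (mul_nonpos_of_nonneg_of_nonpos (hpos b (right_mem_Icc.mpr hab)).le hb)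
  have hQ : u x ^ 2 * cosh (2 * (b - a)) ≤ u a ^ 2 * cosh (2 * (b - x)) :=
    (div_le_div_iff₀ (cosh_pos _) (cosh_pos _)).mp (hanti (left_mem_Icc.mpr hab) hx hx.1)
  have hcosh : exp (2 * (x - a)) * cosh (2 * (b - x)) ≤ 2 * cosh (2 * (b - a)) := by
    convert exp_mul_cosh_le_two_mul_cosh_add (2 * (x - a)) (q := 2 * (b - x))
      (by linarith [hx.2]) using 3
    ring
  nlinarith [mul_le_mul_of_nonneg_left hQ (exp_pos (2 * (x - a))).le,
    mul_le_mul_of_nonneg_left hcosh (sq_nonneg (u a)), cosh_pos (2 * (b - a))]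

/-- If `u'' = c u` with `c` continuous, `c ≥ 4`, `u > 0` on `[a, b]` and
`u'(b) ≤ 0`, then `u(a)² ≥ (1/2) e^{2(x-a)} u(x)²` on `[a, b]`. -/
theorem stmt6
    (u c : ℝ → ℝ) (a b : ℝ) (hab : a ≤ b)
    (hdiff : ∀ x ∈ Icc a b, DifferentiableAt ℝ u x)
    (hdiff' : ∀ x ∈ Icc a b, DifferentiableAt ℝ (deriv u) x)
    (hc : ContinuousOn c (Icc a b)) (hc4 : ∀ x ∈ Icc a b, 4 ≤ c x)
    (hODE : ∀ x ∈ Icc a b, deriv (deriv u) x = c x * u x)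
    (hpos : ∀ x ∈ Icc a b, 0 < u x)
    (hb : deriv u b ≤ 0) :
    ∀ x ∈ Icc a b, u a ^ 2 ≥ (1 / 2) * Real.exp (2 * (x - a)) * u x ^ 2 :=
  stmt6_general u c a b hab hdiff hdiff' hc4 hODE hpos hb
end

section
/- Let f : [a,b] → ℝ be a C² function with f ≥ 0, f'' ≥ k²·f for a constant k > 0, and f'(a) ≥ 0. Then f(x) ≥ cosh(k(x-a))·f(a) for all x ∈ [a, b]. -/
open Real Set

/-- If `f ≥ 0` is C², `f'' ≥ k² f` with `k > 0` and `f'(a) ≥ 0`, then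
`f(x) ≥ cosh(k(x-a)) f(a)` on `[a, b]`. -/
theorem stmt7
    (f : ℝ → ℝ) (a b k : ℝ) (hab : a ≤ b) (hk : 0 < k)
    (hdiff : ∀ x ∈ Icc a b, DifferentiableAt ℝ f x)
    (hdiff' : ∀ x ∈ Icc a b, DifferentiableAt ℝ (deriv f) x)
    (hnonneg : ∀ x ∈ Icc a b, 0 ≤ f x)
    (hODE : ∀ x ∈ Icc a b, deriv (deriv f) x ≥ k ^ 2 * f x)
    (ha : 0 ≤ deriv f a) :
    ∀ x ∈ Icc a b, f x ≥ Real.cosh (k * (x - a)) * f a := by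
  intro x hx
  set c : ℝ → ℝ := fun y => Real.cosh (k * (y - a)) with hc
  set s : ℝ → ℝ := fun y => Real.sinh (k * (y - a)) with hs
  have hlin : ∀ y : ℝ, HasDerivAt (fun y => k * (y - a)) k y := by
    intro y
    simpa using ((hasDerivAt_id y).sub_const a).const_mul k
  have hcd : ∀ y : ℝ, HasDerivAt c (k * s y) y := by
    intro y
    exact ((Real.hasDerivAt_cosh (k * (y - a))).comp y (hlin y)).congr_deriv (mul_comm _ _)
  have hsd : ∀ y : ℝ, HasDerivAt s (k * c y) y := by
    intro y
    exact ((Real.hasDerivAt_sinh (k * (y - a))).comp y (hlin y)).congr_deriv (mul_comm _ _)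
  have hcpos : ∀ y : ℝ, 0 < c y := fun y => Real.cosh_pos _
  set W : ℝ → ℝ := fun y => deriv f y * c y - k * (f y * s y) with hW
  have hWd : ∀ y ∈ Icc a b, HasDerivAt W
      (deriv (deriv f) y * c y + deriv f y * (k * s y)
        - k * (deriv f y * s y + f y * (k * c y))) y := by
    intro y hy
    exact ((hdiff' y hy).hasDerivAt.mul (hcd y)).sub
      (((hdiff y hy).hasDerivAt.mul (hsd y)).const_mul k)
  have hccont : Continuous c :=
    Real.continuous_cosh.comp (continuous_const.mul (continuous_id.sub continuous_const))
  have hscont : Continuous s :=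
    Real.continuous_sinh.comp (continuous_const.mul (continuous_id.sub continuous_const))
  have hcont : ContinuousOn W (Icc a b) :=
    ContinuousOn.sub
      (ContinuousOn.mul (fun y hy => ((hdiff' y hy).continuousAt).continuousWithinAt)
        hccont.continuousOn)
      (ContinuousOn.mul continuousOn_const
        (ContinuousOn.mul (fun y hy => ((hdiff y hy).continuousAt).continuousWithinAt)
          hscont.continuousOn))
  have hWmono : MonotoneOn W (Icc a b) := by
    apply monotoneOn_of_deriv_nonneg (convex_Icc a b) hcont
    · intro y hy
      rw [interior_Icc] at hy
      exact ((hWd y (Ioo_subset_Icc_self hy)).differentiableAt).differentiableWithinAt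
    · intro y hy
      rw [interior_Icc] at hy
      rw [(hWd y (Ioo_subset_Icc_self hy)).deriv]
      have h1 := hODE y (Ioo_subset_Icc_self hy)
      have h2 := hcpos y
      nlinarith
  have hWa : W a = deriv f a := by simp [hW, hc, hs]
  have hWnn : ∀ y ∈ Icc a b, 0 ≤ W y := by
    intro y hy
    have := hWmono (left_mem_Icc.2 hab) hy hy.1
    linarith [this, hWa ▸ ha]
  set q : ℝ → ℝ := fun y => f y / c y with hq
  have hqd : ∀ y ∈ Icc a b, HasDerivAt q (W y / (c y) ^ 2) y := by
    intro y hy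
    have h := (hdiff y hy).hasDerivAt.div (hcd y) (hcpos y).ne'
    convert h using 1
    · rfl
    · rfl
    · rfl
    have := (hcpos y).ne'
    simp only [hW]
    ring
  have hqcont : ContinuousOn q (Icc a b) :=
    ContinuousOn.div (fun y hy => ((hdiff y hy).continuousAt).continuousWithinAt)
      hccont.continuousOn (fun y _ => (hcpos y).ne')
  have hqmono : MonotoneOn q (Icc a b) := by
    apply monotoneOn_of_deriv_nonneg (convex_Icc a b) hqcont
    · intro y hy
      rw [interior_Icc] at hy
      exact ((hqd y (Ioo_subset_Icc_self hy)).differentiableAt).differentiableWithinAt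
    · intro y hy
      rw [interior_Icc] at hy
      rw [(hqd y (Ioo_subset_Icc_self hy)).deriv]
      exact div_nonneg (hWnn y (Ioo_subset_Icc_self hy)) (sq_nonneg _)
  have hle : q a ≤ q x := hqmono (left_mem_Icc.2 hab) hx hx.1
  have hqa : q a = f a := by simp [hq, hc]
  rw [hqa] at hle
  have := (le_div_iff₀ (hcpos x)).mp hle
  simpa [ge_iff_le, hc, mul_comm] using this
end

section
/- Let v : [0, ∞) → ℝ satisfy -v'' + x·v = α·v, v(0) = 0, v ∈ L², ∫₀^∞ v² = 1, with v and v' decaying sufficiently fast at infinity. Then ∫₀^∞ x·v(x)² dx = (2/3)·α. Consequently, if v₁, v₂ are eigenfunctions with eigenvalues a₁ < a₂, then ∫₀^∞ x·(v₂² - v₁²) dx = (2/3)·(a₂ - a₁) > 0. -/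
open Real Set MeasureTheory Filter Topology Asymptotics

/-!
For a solution of `v'' = (x - α) v`, the quantity `Φ = v v' + x (x - α) v² - x v'²` (`airyFlux`)
satisfies `Φ' = (3x - 2α) v²`. It vanishes at `0` because `v(0) = 0` and at infinity by the
exponential decay, so `∫₀^∞ (3x - 2α) v² = 0`, i.e. `∫₀^∞ x v² = (2/3) α ∫₀^∞ v²`.
-/

section ExpDecay

variable {c : ℝ} {f g : ℝ → ℝ}

theorem isBigO_exp_neg_mul_of_abs_le {C : ℝ} (h : ∀ x ≥ (0 : ℝ), |f x| ≤ C * exp (-c * x)) :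
    f =O[atTop] fun x => exp (-c * x) :=
  IsBigO.of_bound C <| by
    filter_upwards [eventually_ge_atTop 0] with x hx
    simpa [abs_of_pos (exp_pos _)] using h x hx

theorem tendsto_exp_neg_mul_atTop_nhds_zero (hc : 0 < c) :
    Tendsto (fun x => exp (-c * x)) atTop (𝓝 0) :=
  tendsto_exp_atBot.comp (tendsto_id.const_mul_atTop_of_neg (neg_neg_of_pos hc))

theorem isBigO_pow_mul_mul_exp_neg (hc : 0 < c) (hf : f =O[atTop] fun x => exp (-c * x))
    (hg : g =O[atTop] fun x => exp (-c * x)) (k : ℕ) :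
    (fun x => x ^ k * (f x * g x)) =O[atTop] fun x => exp (-c * x) :=
  ((isLittleO_pow_exp_pos_mul_atTop k hc).isBigO.mul (hf.mul hg)).congr_right fun x => by
    rw [← exp_add, ← exp_add]; ring_nf

theorem integrableOn_Ioi_pow_mul_mul (hc : 0 < c) (hfc : Continuous f) (hgc : Continuous g)
    (hf : f =O[atTop] fun x => exp (-c * x)) (hg : g =O[atTop] fun x => exp (-c * x))
    (k : ℕ) (a : ℝ) : IntegrableOn (fun x => x ^ k * (f x * g x)) (Ioi a) :=
  integrable_of_isBigO_exp_neg hc (by fun_prop) (isBigO_pow_mul_mul_exp_neg hc hf hg k)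

end ExpDecay

noncomputable def airyFlux (v : ℝ → ℝ) (α x : ℝ) : ℝ :=
  v x * deriv v x + x * (x - α) * v x ^ 2 - x * deriv v x ^ 2

section Airy

variable {v : ℝ → ℝ} {α : ℝ}

theorem hasDerivAt_airyFlux {x : ℝ} (hd : DifferentiableAt ℝ v x)
    (hd' : DifferentiableAt ℝ (deriv v) x) (hODE : -(deriv (deriv v) x) + x * v x = α * v x) :
    HasDerivAt (airyFlux v α) (3 * (x * v x ^ 2) - 2 * α * v x ^ 2) x := by
  have hv'' : deriv (deriv v) x = (x - α) * v x := by linarith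
  refine ((((hd.hasDerivAt.mul hd'.hasDerivAt).add
    (((hasDerivAt_id x).mul ((hasDerivAt_id x).sub_const α)).mul (hd.hasDerivAt.pow 2))).sub
    ((hasDerivAt_id x).mul (hd'.hasDerivAt.pow 2)))).congr_deriv ?_
  simp only [id, Pi.mul_apply, Pi.pow_apply, hv'']
  ring

theorem tendsto_airyFlux_atTop {c : ℝ} (hc : 0 < c) (hv : v =O[atTop] fun x => exp (-c * x))
    (hv' : deriv v =O[atTop] fun x => exp (-c * x)) :
    Tendsto (airyFlux v α) atTop (𝓝 0) := by
  refine IsBigO.trans_tendsto ?_ (tendsto_exp_neg_mul_atTop_nhds_zero hc)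
  refine (((isBigO_pow_mul_mul_exp_neg hc hv hv' 0).add
    (isBigO_pow_mul_mul_exp_neg hc hv hv 2)).sub
    (((isBigO_pow_mul_mul_exp_neg hc hv hv 1).const_mul_left α).add
    (isBigO_pow_mul_mul_exp_neg hc hv' hv' 1))).congr_left fun x => ?_
  simp only [airyFlux]
  ring

theorem integral_Ioi_mul_sq_of_airy_eigenfunction {c : ℝ} (hc : 0 < c)
    (hd : Differentiable ℝ v) (hd' : Differentiable ℝ (deriv v))
    (hODE : ∀ x > (0 : ℝ), -(deriv (deriv v) x) + x * v x = α * v x) (h0 : v 0 = 0)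
    (hv : v =O[atTop] fun x => exp (-c * x)) (hv' : deriv v =O[atTop] fun x => exp (-c * x)) :
    ∫ x in Ioi (0 : ℝ), x * v x ^ 2 = 2 / 3 * α * ∫ x in Ioi (0 : ℝ), v x ^ 2 := by
  have hint := integrableOn_Ioi_pow_mul_mul hc hd.continuous hd.continuous hv hv
  have hint₀ : IntegrableOn (fun x => v x ^ 2) (Ioi 0) := by simpa [sq] using hint 0 0
  have hint₁ : IntegrableOn (fun x => x * v x ^ 2) (Ioi 0) := by simpa [sq] using hint 1 0
  have hflux_cont : Continuous (airyFlux v α) := by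
    have := hd.continuous
    have := hd'.continuous
    unfold airyFlux
    fun_prop
  have hFTC := integral_Ioi_of_hasDerivAt_of_tendsto hflux_cont.continuousWithinAt
    (fun x hx => hasDerivAt_airyFlux (hd x) (hd' x) (hODE x hx))
    ((hint₁.const_mul 3).sub (hint₀.const_mul (2 * α))) (tendsto_airyFlux_atTop hc hv hv')
  rw [integral_sub (hint₁.const_mul 3) (hint₀.const_mul _), integral_const_mul,
    integral_const_mul] at hFTC
  have hflux0 : airyFlux v α 0 = 0 := by simp [airyFlux, h0]
  linarith

end Airy

/-- Hellmann–Feynman for the Airy operator on the half line: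
an `L²`-normalized Dirichlet eigenfunction with eigenvalue `α` satisfies
`∫₀^∞ x v² = (2/3) α`; consequently for eigenvalues `a₁ < a₂`,
`∫₀^∞ x (v₂² - v₁²) = (2/3)(a₂ - a₁) > 0`. -/
theorem stmt9
    (v₁ v₂ : ℝ → ℝ) (a₁ a₂ : ℝ) (ha : a₁ < a₂)
    (hdiff₁ : Differentiable ℝ v₁) (hdiff₁' : Differentiable ℝ (deriv v₁))
    (hdiff₂ : Differentiable ℝ v₂) (hdiff₂' : Differentiable ℝ (deriv v₂))
    (hODE₁ : ∀ x > (0 : ℝ), -(deriv (deriv v₁) x) + x * v₁ x = a₁ * v₁ x)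
    (hODE₂ : ∀ x > (0 : ℝ), -(deriv (deriv v₂) x) + x * v₂ x = a₂ * v₂ x)
    (hv₁0 : v₁ 0 = 0) (hv₂0 : v₂ 0 = 0)
    (hnorm₁ : ∫ x in Ioi (0 : ℝ), v₁ x ^ 2 = 1)
    (hnorm₂ : ∫ x in Ioi (0 : ℝ), v₂ x ^ 2 = 1)
    (hdecay : ∃ C : ℝ, ∀ x ≥ (0 : ℝ),
      |v₁ x| ≤ C * Real.exp (-x) ∧ |deriv v₁ x| ≤ C * Real.exp (-x) ∧
      |v₂ x| ≤ C * Real.exp (-x) ∧ |deriv v₂ x| ≤ C * Real.exp (-x)) :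
    (∫ x in Ioi (0 : ℝ), x * v₁ x ^ 2 = (2 / 3) * a₁) ∧
    (∫ x in Ioi (0 : ℝ), x * v₂ x ^ 2 = (2 / 3) * a₂) ∧
    (∫ x in Ioi (0 : ℝ), x * (v₂ x ^ 2 - v₁ x ^ 2) = (2 / 3) * (a₂ - a₁)) ∧
    0 < (2 / 3 : ℝ) * (a₂ - a₁) := by
  obtain ⟨C, hC⟩ := hdecay
  have hO {f : ℝ → ℝ} (hf : ∀ x ≥ (0 : ℝ), |f x| ≤ C * exp (-x)) :
      f =O[atTop] fun x => exp (-1 * x) :=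
    isBigO_exp_neg_mul_of_abs_le fun x hx => by simpa using hf x hx
  have hv₁ := hO fun x hx => (hC x hx).1
  have hv₁' := hO fun x hx => (hC x hx).2.1
  have hv₂ := hO fun x hx => (hC x hx).2.2.1
  have hv₂' := hO fun x hx => (hC x hx).2.2.2
  have h₁ := integral_Ioi_mul_sq_of_airy_eigenfunction one_pos hdiff₁ hdiff₁' hODE₁ hv₁0 hv₁ hv₁'
  have h₂ := integral_Ioi_mul_sq_of_airy_eigenfunction one_pos hdiff₂ hdiff₂' hODE₂ hv₂0 hv₂ hv₂'
  rw [hnorm₁, mul_one] at h₁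
  rw [hnorm₂, mul_one] at h₂
  have hint₁ := integrableOn_Ioi_pow_mul_mul one_pos hdiff₁.continuous hdiff₁.continuous hv₁ hv₁ 1 0
  have hint₂ := integrableOn_Ioi_pow_mul_mul one_pos hdiff₂.continuous hdiff₂.continuous hv₂ hv₂ 1 0
  simp only [pow_one, ← sq] at hint₁ hint₂
  refine ⟨h₁, h₂, ?_, by linarith⟩
  simp only [mul_sub]
  rw [integral_sub hint₂ hint₁, h₁, h₂]
end
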